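/- Let l1, l2, l3, l4 be integers, each at least 2. Then, summing over the three partitions of {1,2,3,4} into two unordered pairs {i,j} and {k,m}, one has Σ_{{{i,j},{k,m}}} [ζ(l_i,l_j) + ζ(l_j,l_i)]·[ζ(l_k,l_m) + ζ(l_m,l_k)] = 3·ζ(l1)ζ(l2)ζ(l3)ζ(l4) − Σ_{{i,j}} ζ(l_i+l_j)·ζ(l_k)·ζ(l_m) + Σ_{{{i,j},{k,m}}} ζ(l_i+l_j)·ζ(l_k+l_m), where the middle sum on the right runs over all six 2-element subsets {i,j} of {1,2,3,4} (with {k,m} the complementary pair). (Equation (3) of the paper's depth-4 lemma in Section 4.2, restricted to convergent indices; there the left side is the sum of ζ2⊗ζ2 over the 12-element set C'4·S3.) -/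

import Mathlib

open Classical in
/-- The multiple zeta value `ζ(l 0, l 1, …, l (n-1)) =
∑_{m 0 > m 1 > ⋯ > m (n-1) ≥ 1} ∏ i, 1 / (m i) ^ (l i)`. -/
noncomputable def mzv {n : ℕ} (l : Fin n → ℕ) : ℝ :=
  ∑' m : Fin n → ℕ,
    if StrictAnti m ∧ ∀ i, 1 ≤ m i then ∏ i, (1 : ℝ) / (m i : ℝ) ^ (l i) else 0

/-! Splitting the absolutely convergent double series `ζ(a) ζ(b) = ∑_{m, n} m^{-a} n^{-b}` according
to `m > n`, `m < n` or `m = n` gives the stuffle relation `ζ(a) ζ(b) = ζ(a,b) + ζ(b,a) + ζ(a+b)`.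
Substituting `ζ(a,b) + ζ(b,a) = ζ(a) ζ(b) - ζ(a+b)` for each of the six pairs turns both sides into
polynomials in depth-one zeta values, and the identity becomes a ring identity. -/

theorem tsum_mul_tsum_eq_tsum_lt_add_tsum_gt_add_tsum_diag {R ι : Type*} [NormedRing R]
    [CompleteSpace R] [LinearOrder ι] {f g : ι → R}
    (hf : Summable fun i => ‖f i‖) (hg : Summable fun i => ‖g i‖) :
    (∑' i, f i) * (∑' j, g j) =
      (∑' p : ι × ι, if p.2 < p.1 then f p.1 * g p.2 else 0)
        + (∑' p : ι × ι, if p.2 < p.1 then f p.2 * g p.1 else 0)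
        + ∑' i, f i * g i := by
  have hsum (P : ι × ι → Prop) [DecidablePred P] :
      Summable fun p : ι × ι => if P p then f p.1 * g p.2 else 0 :=
    .of_norm_bounded (hf.mul_norm hg) fun p => by split_ifs <;> simp
  have hswap : (∑' p : ι × ι, if p.1 < p.2 then f p.1 * g p.2 else 0) =
      ∑' p : ι × ι, if p.2 < p.1 then f p.2 * g p.1 else 0 :=
    ((Equiv.prodComm ι ι).tsum_eq _).symm
  have hdiag : (∑' p : ι × ι, if p.1 = p.2 then f p.1 * g p.2 else 0) = ∑' i, f i * g i := by
    rw [← Function.Injective.tsum_eq (g := fun i => (i, i)) (fun _ _ h => congrArg Prod.fst h)]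
    · simp
    · rintro ⟨i, j⟩ hij
      obtain rfl : i = j := of_not_not fun h => hij (if_neg h)
      exact ⟨i, rfl⟩
  rw [tsum_mul_tsum_of_summable_norm hf hg, ← hswap, ← hdiag, ← (hsum _).tsum_add (hsum _),
    ← ((hsum _).add (hsum _)).tsum_add (hsum _)]
  refine tsum_congr fun p => ?_
  rcases lt_trichotomy p.1 p.2 with h | h | h
  · simp [h, h.not_gt, h.ne]
  · simp [h]
  · simp [h, h.not_gt, h.ne']

-- The term `n = 0`, which `mzv` excludes, vanishes on the right since `1 / 0 = 0` in `ℝ`.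
lemma mzv_singleton {k : ℕ} (hk : k ≠ 0) : mzv ![k] = ∑' n : ℕ, 1 / (n : ℝ) ^ k := by
  rw [mzv, ← (Equiv.funUnique (Fin 1) ℕ).symm.tsum_eq]
  refine tsum_congr fun n => ?_
  rcases n.eq_zero_or_pos with rfl | hn
  · simp [hk]
  · simp [Subsingleton.strictAnti, Nat.one_le_iff_ne_zero.mpr hn.ne']

lemma mzv_pair (a : ℕ) {b : ℕ} (hb : b ≠ 0) :
    mzv ![a, b] =
      ∑' p : ℕ × ℕ, if p.2 < p.1 then 1 / (p.1 : ℝ) ^ a * (1 / (p.2 : ℝ) ^ b) else 0 := by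
  rw [mzv, ← (finTwoArrowEquiv ℕ).symm.tsum_eq]
  refine tsum_congr fun ⟨x, y⟩ => ?_
  rcases y.eq_zero_or_pos with rfl | hy
  · simp [hb]
  · by_cases h : y < x
    · have hcond : StrictAnti ![x, y] ∧ ∀ i, 1 ≤ ![x, y] i := by
        simp [Fin.forall_fin_two, h]
        omega
      rw [finTwoArrowEquiv_symm_apply, if_pos hcond, if_pos h, Fin.prod_univ_two]
      rfl
    · simp [h]

lemma summable_norm_one_div_nat_pow {k : ℕ} (hk : 2 ≤ k) :
    Summable fun n : ℕ => ‖1 / (n : ℝ) ^ k‖ :=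
  (Real.summable_one_div_nat_pow.mpr (by omega)).norm

theorem mzv_mul_mzv {a b : ℕ} (ha : 2 ≤ a) (hb : 2 ≤ b) :
    mzv ![a] * mzv ![b] = mzv ![a, b] + mzv ![b, a] + mzv ![a + b] := by
  rw [mzv_singleton (by omega), mzv_singleton (by omega), mzv_singleton (by omega),
    mzv_pair a (by omega), mzv_pair b (by omega),
    tsum_mul_tsum_eq_tsum_lt_add_tsum_gt_add_tsum_diag
      (summable_norm_one_div_nat_pow ha) (summable_norm_one_div_nat_pow hb)]
  congr 1
  · congr 1
    exact tsum_congr fun p => by rw [mul_comm]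
  · exact tsum_congr fun n => by rw [pow_add, one_div_mul_one_div]

theorem mzv_pair_add_mzv_pair_swap {a b : ℕ} (ha : 2 ≤ a) (hb : 2 ≤ b) :
    mzv ![a, b] + mzv ![b, a] = mzv ![a] * mzv ![b] - mzv ![a + b] := by
  rw [mzv_mul_mzv ha hb, add_sub_cancel_right]

theorem sum_over_pair_partitions_depth_two_squares (l1 l2 l3 l4 : ℕ)
    (h1 : 2 ≤ l1) (h2 : 2 ≤ l2) (h3 : 2 ≤ l3) (h4 : 2 ≤ l4) :
    (mzv ![l1, l2] + mzv ![l2, l1]) * (mzv ![l3, l4] + mzv ![l4, l3])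
      + (mzv ![l1, l3] + mzv ![l3, l1]) * (mzv ![l2, l4] + mzv ![l4, l2])
      + (mzv ![l1, l4] + mzv ![l4, l1]) * (mzv ![l2, l3] + mzv ![l3, l2]) =
      3 * (mzv ![l1] * mzv ![l2] * mzv ![l3] * mzv ![l4])
        - (mzv ![l1 + l2] * mzv ![l3] * mzv ![l4]
            + mzv ![l1 + l3] * mzv ![l2] * mzv ![l4]
            + mzv ![l1 + l4] * mzv ![l2] * mzv ![l3]
            + mzv ![l2 + l3] * mzv ![l1] * mzv ![l4]
            + mzv ![l2 + l4] * mzv ![l1] * mzv ![l3]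
            + mzv ![l3 + l4] * mzv ![l1] * mzv ![l2])
        + (mzv ![l1 + l2] * mzv ![l3 + l4] + mzv ![l1 + l3] * mzv ![l2 + l4]
            + mzv ![l1 + l4] * mzv ![l2 + l3]) := by
  rw [mzv_pair_add_mzv_pair_swap h1 h2, mzv_pair_add_mzv_pair_swap h1 h3,
    mzv_pair_add_mzv_pair_swap h1 h4, mzv_pair_add_mzv_pair_swap h2 h3,
    mzv_pair_add_mzv_pair_swap h2 h4, mzv_pair_add_mzv_pair_swap h3 h4]
  ring
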